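/- arXiv:1705.02810 — 2 statements merged into one kernel-verified Lean document; each statement's English description precedes it below -/
import Mathlib

section
/- Let A → B be a map of commutative rings (or ring objects) and G a finite group acting on B by A-algebra maps such that the map B ⊗_A B → ∏_{g∈G} B, b₁ ⊗ b₂ ↦ (b₁·g(b₂))_g, is an isomorphism (an 'unramified' or Galois-type extension). Then for each n ≥ 1 the n-fold tensor power satisfies B^{⊗_A (n+1)} ≅ ∏_{G^n} B, identifying the Amitsur (cobar) complex of A → B with the cochain complex computing the G-action on B. -/
open scoped TensorProduct PiTensorProduct


noncomputable section Aux

variable {A B G : Type} [CommRing A] [CommRing B] [Algebra A B]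
  [Group G] [Finite G] (σ : G →* (B →ₐ[A] B))

def auxF (n : ℕ) : MultilinearMap A (fun _ : Fin (n + 1) => B) ((Fin n → G) → B) :=
  MultilinearMap.pi fun g =>
    (MultilinearMap.mkPiAlgebra A (Fin (n + 1)) B).compLinearMap
      fun i => (σ (((List.ofFn g).take (i : ℕ)).prod)).toLinearMap

lemma auxF_apply (n : ℕ) (b : Fin (n + 1) → B) (g : Fin n → G) :
    auxF σ n b g = ∏ i : Fin (n + 1), σ (((List.ofFn g).take (i : ℕ)).prod) (b i) := rfl

def auxHom (n : ℕ) : (⨂[A] _ : Fin (n + 1), B) →ₐ[A] ((Fin n → G) → B) :=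
  PiTensorProduct.liftAlgHom (auxF σ n)
    (by funext g; simp [auxF_apply])
    (by
      intro x y; funext g
      simp [auxF_apply, Finset.prod_mul_distrib])

lemma auxHom_tprod (n : ℕ) (b : Fin (n + 1) → B) (g : Fin n → G) :
    auxHom σ n (PiTensorProduct.tprod A b) g
      = ∏ i : Fin (n + 1), σ (((List.ofFn g).take (i : ℕ)).prod) (b i) := by
  simp [auxHom, auxF_apply]

def flipCurry (n : ℕ) : ((Fin n → G) → (G → B)) ≃ₗ[A] ((Fin (n + 1) → G) → B) where
  toFun f g := f (Fin.tail g) (g 0)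
  invFun F g' := fun g₁ => F (Fin.cons g₁ g')
  map_add' _ _ := rfl
  map_smul' _ _ := rfl
  left_inv f := by
    funext g' g₁
    simp [Fin.tail_cons, Fin.cons_zero]
  right_inv F := by
    funext g
    simp [Fin.cons_self_tail]

end Aux

section Aux2

set_option linter.unusedSectionVars false

variable {A B G : Type} [CommRing A] [CommRing B] [Algebra A B]
  [Group G] [Finite G] (σ : G →* (B →ₐ[A] B))

lemma prefix_succ (n : ℕ) (g : Fin (n + 1) → G) (i : Fin (n + 1)) :
    ((List.ofFn g).take ((i.succ : Fin (n + 2)) : ℕ)).prod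
      = g 0 * ((List.ofFn (Fin.tail g)).take (i : ℕ)).prod := by
  rw [List.ofFn_succ, Fin.val_succ, List.take_succ_cons, List.prod_cons]
  rfl

lemma auxHom_bijective
    (e : (B ⊗[A] B) ≃ₐ[A] (G → B))
    (he : ∀ (b₁ b₂ : B) (g : G), e (b₁ ⊗ₜ[A] b₂) g = b₁ * σ g b₂) :
    ∀ n : ℕ, Function.Bijective (auxHom σ n) := by
  have : Fintype G := Fintype.ofFinite G
  have : DecidableEq G := Classical.decEq G
  intro n
  induction n with
  | zero =>
    let E0 : (⨂[A] _ : Fin 1, B) ≃ₗ[A] ((Fin 0 → G) → B) :=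
      (PiTensorProduct.subsingletonEquiv (0 : Fin 1)).trans
        (LinearEquiv.funUnique (Fin 0 → G) A B).symm
    have key : ∀ x, auxHom σ 0 x = E0 x := by
      suffices h : (auxHom σ 0).toLinearMap = (E0 : (⨂[A] _ : Fin 1, B) →ₗ[A] _) from
        fun x => DFunLike.congr_fun h x
      apply PiTensorProduct.ext
      apply MultilinearMap.ext
      intro b
      funext g
      simp [E0, auxHom_tprod, LinearEquiv.funUnique]
    have : ⇑(auxHom σ 0) = ⇑E0 := funext key
    rw [show ((auxHom σ 0 : (⨂[A] _ : Fin 1, B) → _)) = ⇑E0 from funext key]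
    exact E0.bijective
  | succ n ih =>
    let eSum : Fin 1 ⊕ Fin (n + 1) ≃ Fin (n + 2) :=
      finSumFinEquiv.trans (finCongr (Nat.add_comm 1 (n + 1)))
    let Ln : (⨂[A] _ : Fin (n + 1), B) ≃ₗ[A] ((Fin n → G) → B) :=
      LinearEquiv.ofBijective (auxHom σ n).toLinearMap ih
    let L : (⨂[A] _ : Fin (n + 2), B) ≃ₗ[A] ((Fin (n + 1) → G) → B) :=
      (PiTensorProduct.reindex A (fun _ : Fin (n + 2) => B) eSum.symm).trans <|
      (PiTensorProduct.tmulEquiv A B).symm.trans <|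
      (TensorProduct.congr (PiTensorProduct.subsingletonEquiv (0 : Fin 1)) Ln).trans <|
      (TensorProduct.piRight A A B (fun _ : Fin n → G => B)).trans <|
      (LinearEquiv.piCongrRight (fun _ : Fin n → G => e.toLinearEquiv)).trans <|
      flipCurry n
    have key : ∀ x, auxHom σ (n + 1) x = L x := by
      suffices h : (auxHom σ (n + 1)).toLinearMap = (L : (⨂[A] _ : Fin (n + 2), B) →ₗ[A] _) from
        fun x => DFunLike.congr_fun h x
      apply PiTensorProduct.ext
      apply MultilinearMap.ext
      intro b
      funext g
      have h1 : L (PiTensorProduct.tprod A b)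
          = flipCurry (A := A) (B := B) (G := G) n (fun g' g₁ => e ((b (eSum (Sum.inl 0))) ⊗ₜ[A]
              (auxHom σ n (PiTensorProduct.tprod A (fun i => b (eSum (Sum.inr i)))) g')) g₁) := by
        simp only [L, LinearEquiv.trans_apply, PiTensorProduct.reindex_tprod,
          Equiv.symm_symm]
        rw [PiTensorProduct.tmulEquiv_symm_apply]
        simp only [TensorProduct.congr_tmul, PiTensorProduct.subsingletonEquiv_apply_tprod,
          TensorProduct.piRight_apply, TensorProduct.piRightHom_tmul]
        rfl
      rw [LinearMap.compMultilinearMap_apply, LinearMap.compMultilinearMap_apply]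
      rw [AlgHom.toLinearMap_apply, auxHom_tprod]
      rw [LinearEquiv.coe_coe, h1]
      show _ = e (_ ⊗ₜ[A] _) (g 0)
      rw [he, auxHom_tprod]
      rw [map_prod]
      rw [Fin.prod_univ_succ]
      have h0 : eSum (Sum.inl 0) = (0 : Fin (n + 2)) := rfl
      rw [h0]
      congr 1
      · simp
      · apply Finset.prod_congr rfl
        intro i _
        have h2 : eSum (Sum.inr i) = i.succ := by
          apply Fin.ext
          simp [eSum, finSumFinEquiv, Nat.add_comm]
        rw [prefix_succ, map_mul, AlgHom.mul_apply, h2]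
    rw [show ((auxHom σ (n + 1) : (⨂[A] _ : Fin (n + 2), B) → _)) = ⇑L from funext key]
    exact L.bijective

end Aux2

/- STATEMENT 5: let A → B be a map of commutative rings, G a finite group
acting on B by A-algebra maps, which is unramified (Galois-type): the map
B ⊗_A B → ∏_{g ∈ G} B, b₁ ⊗ b₂ ↦ (b₁ · g(b₂))_g, is an isomorphism.  Then for
each n ≥ 1 the (n+1)-fold tensor power satisfies B^{⊗_A(n+1)} ≅ ∏_{G^n} B via
b₀ ⊗ ⋯ ⊗ b_n ↦ ((g₁,…,g_n) ↦ b₀ · g₁(b₁) · (g₁g₂)(b₂) ⋯), identifying the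
Amitsur (cobar) complex of A → B with the cochain complex for the G-action. -/
theorem stmt_5
    (A B : Type) [CommRing A] [CommRing B] [Algebra A B]
    (G : Type) [Group G] [Finite G]
    (σ : G →* (B →ₐ[A] B))
    (hunram : ∃ e : (B ⊗[A] B) ≃ₐ[A] (G → B),
      ∀ (b₁ b₂ : B) (g : G), e (b₁ ⊗ₜ[A] b₂) g = b₁ * σ g b₂) :
    ∀ n : ℕ, 1 ≤ n →
      ∃ Ψ : (⨂[A] _ : Fin (n + 1), B) ≃ₐ[A] ((Fin n → G) → B),
        ∀ (b : Fin (n + 1) → B) (g : Fin n → G),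
          Ψ (PiTensorProduct.tprod A b) g =
            ∏ i : Fin (n + 1), σ (((List.ofFn g).take (i : ℕ)).prod) (b i) := by
  obtain ⟨e, he⟩ := hunram
  intro n _
  exact ⟨AlgEquiv.ofBijective (auxHom σ n) (auxHom_bijective σ e he n),
    fun b g => auxHom_tprod σ n b g⟩
end

section
/- In the bigraded ring A_* = ℤ₂[τ, h₁, a, b^{±1}]/(2h₁, τh₁³, a² − 4b, h₁a), the group of homogeneous units is {u·b^k : u ∈ ℤ₂^×, k ∈ ℤ}; in particular a homogeneous unit exists in bidegree (p,q) iff (p,q) ∈ ℤ·(8,4). -/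
/-!
Sending `τ, h₁ ↦ 0`, `a ↦ 2`, `b, b' ↦ 1` respects all relations and gives a ring map `A_* → ℤ₂`.
A monomial of bidegree outside `ℤ·(8,4)` involves `τ`, `h₁` or `a`, so it lands in the maximal
ideal `2ℤ₂`; a unit cannot, so homogeneous units live in bidegrees `k·(8,4)`. There every monomial
either contains `τh₁³` (forced by the degree as soon as `τ` occurs) or, by `a² = 4b`, is a
`ℤ₂`-multiple of `bᵏ`. Thus a homogeneous unit is `c·bᵏ`, and `c`, its image in `ℤ₂`, is a unit.
-/

open MvPolynomial

/-- Variables τ, h₁, a, b, b' (b' = b⁻¹). -/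
noncomputable abbrev KQpoly : Type := MvPolynomial (Fin 5) ℤ_[2]

/-- π_{*,*}(KQ^∧₂) = ℤ₂[τ, h₁, a, b^{±1}]/(2h₁, τh₁³, a² - 4b, h₁a), with
b inverted via the extra variable b' and the relation b·b' = 1. -/
noncomputable abbrev KQring : Type :=
  KQpoly ⧸ Ideal.span ({2 * X 1, X 0 * X 1 ^ 3, X 2 ^ 2 - 4 * X 3,
    X 1 * X 2, X 3 * X 4 - 1} : Set KQpoly)

noncomputable abbrev KQmk : KQpoly →+* KQring := Ideal.Quotient.mk _

/-- Bidegrees of the generators: |τ| = (0,-1), |h₁| = (1,1), |a| = (4,2),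
|b| = (8,4), |b'| = (-8,-4). -/
def KQdeg : Fin 5 → ℤ × ℤ := ![(0, -1), (1, 1), (4, 2), (8, 4), (-8, -4)]

/-- The homogeneous part of bidegree v: the ℤ₂-span of (classes of) monomials
of total bidegree v. -/
noncomputable def KQgrade (v : ℤ × ℤ) : Submodule ℤ_[2] KQring :=
  Submodule.span ℤ_[2] {x : KQring | ∃ e : Fin 5 →₀ ℕ,
    (∑ i : Fin 5, (e i : ℤ) • KQdeg i) = v ∧ x = KQmk (monomial e 1)}

namespace KQ

lemma mk_X0_mul_X1_pow_three : KQmk (X 0) * KQmk (X 1) ^ 3 = 0 := by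
  simpa using (Ideal.Quotient.eq_zero_iff_mem.2 (Ideal.subset_span (by simp)) :
    KQmk (X 0 * X 1 ^ 3) = 0)

lemma mk_X2_sq : KQmk (X 2) ^ 2 = 4 * KQmk (X 3) := by
  have h : KQmk (X 2 ^ 2) = KQmk (4 * X 3) := Ideal.Quotient.eq.2 (Ideal.subset_span (by simp))
  rwa [map_pow, map_mul, map_ofNat] at h

lemma mk_X3_mul_X4 : KQmk (X 3) * KQmk (X 4) = 1 := by
  simpa using (Ideal.Quotient.eq.2 (Ideal.subset_span (by simp)) :
    KQmk (X 3 * X 4) = KQmk 1)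

noncomputable def b : KQringˣ :=
  ⟨KQmk (X 3), KQmk (X 4), mk_X3_mul_X4, by rw [mul_comm, mk_X3_mul_X4]⟩

lemma mk_X3_pow_mul_X4_pow (m n : ℕ) :
    KQmk (X 3 ^ m * X 4 ^ n) = ↑(b ^ ((m : ℤ) - n)) := by
  rw [zpow_sub, zpow_natCast, zpow_natCast, Units.val_mul, Units.val_pow_eq_pow_val,
    ← inv_pow, Units.val_pow_eq_pow_val, map_mul, map_pow, map_pow]
  rfl

lemma mk_monomial (e : Fin 5 →₀ ℕ) :
    KQmk (monomial e 1) =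
      KQmk (X 0) ^ e 0 * KQmk (X 1) ^ e 1 * KQmk (X 2) ^ e 2 * ↑(b ^ ((e 3 : ℤ) - e 4)) := by
  rw [← mk_X3_pow_mul_X4_pow, monomial_eq, Finsupp.prod_fintype _ _ (fun i => pow_zero _),
    Fin.prod_univ_five]
  simp only [C_1, one_mul, map_mul, map_pow]
  ring

lemma sum_smul_KQdeg (e : Fin 5 →₀ ℕ) :
    ∑ i : Fin 5, (e i : ℤ) • KQdeg i =
      ((e 1 : ℤ) + 4 * e 2 + 8 * (e 3 - e 4), -(e 0 : ℤ) + e 1 + 2 * e 2 + 4 * (e 3 - e 4)) := by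
  simp only [KQdeg, Int.reduceNeg, zsmul_eq_mul, Int.cast_natCast, Fin.sum_univ_five,
    Matrix.cons_val_zero, Matrix.cons_val_one, Matrix.cons_val, Prod.ext_iff, Prod.fst_add,
    Prod.fst_mul, Prod.fst_natCast, mul_zero, mul_one, zero_add, mul_neg, Prod.snd_add, Prod.snd_mul,
    Prod.snd_natCast]
  constructor <;> ring

lemma smul_eq_mk_C_mul (c : ℤ_[2]) (x : KQring) : c • x = KQmk (C c) * x :=
  Algebra.smul_def c x

lemma grade_le {v : ℤ × ℤ} {S : Submodule ℤ_[2] KQring}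
    (h : ∀ e : Fin 5 →₀ ℕ, ∑ i : Fin 5, (e i : ℤ) • KQdeg i = v → KQmk (monomial e 1) ∈ S) :
    KQgrade v ≤ S :=
  Submodule.span_le.2 fun _ ⟨e, he, hx⟩ => hx ▸ h e he

noncomputable def eval : KQring →ₐ[ℤ_[2]] ℤ_[2] :=
  Ideal.Quotient.liftₐ _ (aeval ![0, 0, 2, 1, 1]) fun _ hp =>
    (Ideal.span_le (I := RingHom.ker (aeval (R := ℤ_[2]) ![(0 : ℤ_[2]), 0, 2, 1, 1]))).2
      (by rintro _ (rfl | rfl | rfl | rfl | rfl) <;> simp; norm_num) hp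

lemma eval_mk_X (i : Fin 5) : eval (KQmk (X i)) = ![0, 0, 2, 1, 1] i :=
  aeval_X _ i

lemma eval_b_zpow (k : ℤ) : eval ↑(b ^ k) = 1 := by
  have hb : Units.map eval.toMonoidHom b = 1 := Units.ext (eval_mk_X 3)
  have h := congrArg Units.val (congrArg (· ^ k) hb)
  simp only [← map_zpow, one_zpow, Units.coe_map, Units.val_one] at h
  exact h

lemma eval_mk_monomial (e : Fin 5 →₀ ℕ) :
    eval (KQmk (monomial e 1)) = 0 ^ e 0 * 0 ^ e 1 * 2 ^ e 2 := by
  simp [mk_monomial, eval_b_zpow, eval_mk_X]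

open IsLocalRing in
lemma grade_le_comap_maximalIdeal {v : ℤ × ℤ} (hv : v ∉ AddSubgroup.zmultiples (8, 4)) :
    KQgrade v ≤ Submodule.comap eval.toLinearMap (maximalIdeal ℤ_[2]) := by
  refine grade_le fun e he => ?_
  change eval (KQmk (monomial e 1)) ∈ maximalIdeal ℤ_[2]
  have h2 : (2 : ℤ_[2]) ∈ maximalIdeal ℤ_[2] := PadicInt.p_nonunit
  rw [eval_mk_monomial]
  by_cases h01 : e 0 = 0 ∧ e 1 = 0
  · rcases Nat.eq_zero_or_pos (e 2) with h2' | h2'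
    · refine absurd (AddSubgroup.mem_zmultiples_iff.2 ⟨(e 3 : ℤ) - e 4, ?_⟩) hv
      rw [← he, sum_smul_KQdeg, h01.1, h01.2, h2']
      simp only [Prod.smul_mk, Int.zsmul_eq_mul, CharP.cast_eq_zero, mul_zero, add_zero, zero_add,
        neg_zero, Prod.ext_iff]
      constructor <;> ring
    · exact Ideal.mul_mem_left _ _ (Ideal.pow_mem_of_mem _ h2 _ h2')
  · rw [not_and_or] at h01
    rcases h01 with h0 | h1 <;> simp [zero_pow, *]

lemma grade_le_span_b_zpow (k : ℤ) :
    KQgrade (k • (8, 4)) ≤ ℤ_[2] ∙ (↑(b ^ k) : KQring) := by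
  refine grade_le fun e he => Submodule.mem_span_singleton.2 ?_
  rw [sum_smul_KQdeg] at he
  simp only [Prod.smul_mk, smul_eq_mul, Prod.mk.injEq] at he
  rw [mk_monomial]
  by_cases h0 : e 0 = 0
  · -- `a ^ 2 = 4 b` turns the remaining `a`-power into a power of `b`
    obtain ⟨g, hg⟩ : ∃ g, e 2 = 2 * g := ⟨e 2 / 2, by omega⟩
    refine ⟨4 ^ g, ?_⟩
    rw [h0, show e 1 = 0 by omega, hg, pow_mul, mk_X2_sq, mul_pow,
      show k = g + ((e 3 : ℤ) - e 4) by omega, zpow_add, zpow_natCast, smul_eq_mk_C_mul]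
    simp only [map_ofNat, map_pow, b, Units.val_mul, Units.val_pow_eq_pow_val, pow_zero,
      mul_one, one_mul]
    ring
  · -- the degree forces `h₁ ^ e 1` with `e 1 = 2 * e 0 ≥ 4`, so `τ h₁ ^ 3` divides the monomial
    refine ⟨0, ?_⟩
    rw [zero_smul, show e 0 = (e 0 - 1) + 1 by omega, show e 1 = (e 1 - 3) + 3 by omega]
    linear_combination (-(KQmk (X 0) ^ (e 0 - 1) * KQmk (X 1) ^ (e 1 - 3) * KQmk (X 2) ^ e 2 *
      ↑(b ^ ((e 3 : ℤ) - e 4)))) * mk_X0_mul_X1_pow_three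

lemma smul_b_zpow (c : ℤ_[2]) (k : ℤ) :
    c • (↑(b ^ k) : KQring) = KQmk (C c * X 3 ^ k.toNat * X 4 ^ (-k).toNat) := by
  rw [mul_assoc, map_mul, mk_X3_pow_mul_X4_pow, show (k.toNat : ℤ) - (-k).toNat = k by omega,
    smul_eq_mk_C_mul]

lemma mem_zmultiples_of_isUnit {x : KQring} (hx : IsUnit x) {v : ℤ × ℤ} (hv : x ∈ KQgrade v) :
    v ∈ AddSubgroup.zmultiples (8, 4) := by
  by_contra h
  exact (IsLocalRing.mem_maximalIdeal _).1 (grade_le_comap_maximalIdeal h hv) (hx.map eval)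

lemma b_zpow_mem_grade (k : ℤ) : (↑(b ^ k) : KQring) ∈ KQgrade (k • (8, 4)) := by
  refine Submodule.subset_span ⟨Finsupp.single 3 k.toNat + Finsupp.single 4 (-k).toNat, ?_, ?_⟩
  · rw [sum_smul_KQdeg, Prod.smul_mk]
    congr 1 <;> simp <;> omega
  · simp [mk_monomial]

end KQ

theorem stmt_9 :
    (∀ x : KQring, IsUnit x → (∃ v, x ∈ KQgrade v ∧ x ≠ 0) →
      ∃ (u : ℤ_[2]ˣ) (m n : ℕ),
        x = KQmk (C (u : ℤ_[2]) * X 3 ^ m * X 4 ^ n)) ∧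
    (∀ v : ℤ × ℤ, (∃ x : KQring, IsUnit x ∧ x ∈ KQgrade v ∧ x ≠ 0) ↔
      v ∈ AddSubgroup.zmultiples ((8 : ℤ), (4 : ℤ))) := by
  refine ⟨fun x hx ⟨v, hv, _⟩ => ?_,
    fun v => ⟨fun ⟨x, hx, hv, _⟩ => KQ.mem_zmultiples_of_isUnit hx hv, fun hv => ?_⟩⟩
  · obtain ⟨k, rfl⟩ := AddSubgroup.mem_zmultiples_iff.1 (KQ.mem_zmultiples_of_isUnit hx hv)
    obtain ⟨c, rfl⟩ := Submodule.mem_span_singleton.1 (KQ.grade_le_span_b_zpow k hv)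
    have hc : IsUnit c := by simpa [KQ.eval_b_zpow] using hx.map KQ.eval
    exact ⟨hc.unit, k.toNat, (-k).toNat, KQ.smul_b_zpow c k⟩
  · obtain ⟨k, rfl⟩ := AddSubgroup.mem_zmultiples_iff.1 hv
    refine ⟨_, (KQ.b ^ k).isUnit, KQ.b_zpow_mem_grade k, fun h => ?_⟩
    simpa [h] using KQ.eval_b_zpow k
end
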